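/- arXiv:1608.04547 — 5 statements merged into one kernel-verified Lean document; each statement's English description precedes it below -/
import Mathlib

section
/- Let k, n ≥ 1 be integers, b ≥ 0 an integer, and B ≥ 1 a real number. Suppose φ : (0,1)ᵏ → ℝⁿ is a map whose coordinate functions have continuous partial derivatives up to order b, all of modulus bounded by B on (0,1)ᵏ. Then for every multi-index i ∈ ℕ₀ⁿ and every multi-index α ∈ ℕ₀ᵏ with ℓ(α) ≤ b, one has sup_{z ∈ (0,1)ᵏ} |∂^α(φⁱ)(z)| ≤ B^{ℓ(i)} · ℓ(i)^{ℓ(α)}. -/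
/-! Iterating the Leibniz rule, a mixed partial `∂^L` of a product of factors `g s`, `s ∈ ι`, is a
sum of `|ι| ^ |L|` products, one for each way `σ` of distributing the `|L|` derivatives among the
factors; in each product every factor is a mixed partial of order at most `|L|` of some `g s`.
Writing `φⁱ` as a product of `ℓ(i)` coordinate functions, each such product is bounded by
`B ^ ℓ(i)`. -/

/-- The open unit hypercube `(0,1)ᵏ ⊂ ℝᵏ`. -/
def unitCube (k : ℕ) : Set (Fin k → ℝ) := Set.univ.pi fun _ => Set.Ioo (0 : ℝ) 1

/-- The iterated mixed partial derivative (within a set `S`) of `f : ℝᵏ → ℝ` along a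
list of coordinate directions: `mixedPartialWithin S [j₁, …, j_l] f = ∂/∂X_{j₁} ⋯ ∂/∂X_{j_l} f`.
A multi-index `α` corresponds to any list in which the direction `j` occurs `α_j` times. -/
noncomputable def mixedPartialWithin {k : ℕ} (S : Set (Fin k → ℝ)) :
    List (Fin k) → ((Fin k → ℝ) → ℝ) → ((Fin k → ℝ) → ℝ)
  | [], f => f
  | j :: L, f => fun z => fderivWithin ℝ (mixedPartialWithin S L f) S z (Pi.single j 1)

theorem isOpen_unitCube (k : ℕ) : IsOpen (unitCube k) :=
  isOpen_set_pi Set.finite_univ fun _ _ => isOpen_Ioo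

theorem fderivWithin_prod_apply_eq_sum_prod_update {𝕜 E 𝔸 ι : Type*} [NontriviallyNormedField 𝕜]
    [NormedAddCommGroup E] [NormedSpace 𝕜 E] [NormedCommRing 𝔸] [NormedAlgebra 𝕜 𝔸]
    [Fintype ι] [DecidableEq ι] {g : ι → E → 𝔸} {s : Set E} {x : E}
    (hs : UniqueDiffWithinAt 𝕜 s x) (hg : ∀ i, DifferentiableWithinAt 𝕜 (g i) s x) (v : E) :
    fderivWithin 𝕜 (fun y => ∏ i, g i y) s x v =
      ∑ i, ∏ j, Function.update (fun j => g j x) i (fderivWithin 𝕜 (g i) s x v) j := by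
  rw [fderivWithin_finsetProd hs fun i _ => hg i]
  simp only [sum_apply, smul_apply, smul_eq_mul]
  refine Finset.sum_congr rfl fun i _ => ?_
  rw [Finset.prod_update_of_mem (Finset.mem_univ i), Finset.sdiff_singleton_eq_erase, mul_comm]

section

variable {k : ℕ} {S : Set (Fin k → ℝ)} {ι : Type*} [Fintype ι]

theorem exists_mixedPartialWithin_prod_eqOn_sum (hS : UniqueDiffOn ℝ S)
    (g : ι → (Fin k → ℝ) → ℝ) (L : List (Fin k))
    (hg : ∀ s (L' : List (Fin k)), L'.length < L.length →
      DifferentiableOn ℝ (mixedPartialWithin S L' (g s)) S) :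
    ∃ T : (Fin L.length → ι) → ι → List (Fin k), (∀ σ s, (T σ s).length ≤ L.length) ∧
      Set.EqOn (mixedPartialWithin S L fun z => ∏ s, g s z)
        (fun z => ∑ σ, ∏ s, mixedPartialWithin S (T σ s) (g s) z) S := by
  classical
  induction L with
  | nil => exact ⟨fun _ _ => [], by simp, fun z _ => by simp [mixedPartialWithin]⟩
  | cons j L ih =>
    obtain ⟨T, hT_length, hT⟩ := ih fun s L' hL' => hg s L' (by simp; omega)
    -- `σ 0` is the factor hit by the new derivative `∂_j`, `Fin.tail σ` distributes the others.
    refine ⟨fun σ => Function.update (T (Fin.tail σ)) (σ 0) (j :: T (Fin.tail σ) (σ 0)),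
      fun σ s => ?_, fun z hz => ?_⟩
    · rcases eq_or_ne s (σ 0) with rfl | hs
      · simpa using hT_length (Fin.tail σ) (σ 0)
      · simpa [Function.update_of_ne hs] using (hT_length (Fin.tail σ) s).trans (Nat.le_succ _)
    have hdiff : ∀ τ s, DifferentiableWithinAt ℝ (mixedPartialWithin S (T τ s) (g s)) S z :=
      fun τ s => hg s _ ((hT_length τ s).trans_lt (by simp)) z hz
    calc mixedPartialWithin S (j :: L) (fun z => ∏ s, g s z) z
        = fderivWithin ℝ (fun w => ∑ τ, ∏ s, mixedPartialWithin S (T τ s) (g s) w) S z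
            (Pi.single j 1) := by
          dsimp only [mixedPartialWithin]
          rw [fderivWithin_congr hT (hT hz)]
      _ = ∑ τ, ∑ s, ∏ t, Function.update (fun t => mixedPartialWithin S (T τ t) (g t) z) s
            (mixedPartialWithin S (j :: T τ s) (g s) z) t := by
          rw [fderivWithin_fun_sum (hS z hz) fun τ _ => (HasFDerivWithinAt.finsetProd
              fun s _ => (hdiff τ s).hasFDerivWithinAt).differentiableWithinAt,
            sum_apply]
          exact Finset.sum_congr rfl fun τ _ =>
            fderivWithin_prod_apply_eq_sum_prod_update (hS z hz) (hdiff τ) _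
      _ = _ := by
          refine Eq.trans ?_ ((Fin.consEquiv fun _ : Fin (L.length + 1) => ι).sum_comp _)
          rw [Fintype.sum_prod_type, Finset.sum_comm]
          simp only [Function.apply_update (fun t l => mixedPartialWithin S l (g t) z)]
          rfl

theorem abs_mixedPartialWithin_prod_le (hS : UniqueDiffOn ℝ S)
    (g : ι → (Fin k → ℝ) → ℝ) (L : List (Fin k)) {B : ℝ}
    (hg : ∀ s (L' : List (Fin k)), L'.length < L.length →
      DifferentiableOn ℝ (mixedPartialWithin S L' (g s)) S)
    (hB : ∀ s (L' : List (Fin k)), L'.length ≤ L.length →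
      ∀ z ∈ S, |mixedPartialWithin S L' (g s) z| ≤ B)
    {z : Fin k → ℝ} (hz : z ∈ S) :
    |mixedPartialWithin S L (fun z => ∏ s, g s z) z| ≤
      B ^ Fintype.card ι * (Fintype.card ι : ℝ) ^ L.length := by
  obtain ⟨T, hT_length, hT⟩ := exists_mixedPartialWithin_prod_eqOn_sum hS g L hg
  calc |mixedPartialWithin S L (fun z => ∏ s, g s z) z|
      ≤ ∑ σ, ∏ s, |mixedPartialWithin S (T σ s) (g s) z| := by
        rw [hT hz]
        refine (Finset.abs_sum_le_sum_abs _ _).trans_eq ?_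
        simp only [Finset.abs_prod]
    _ ≤ ∑ _σ : Fin L.length → ι, ∏ _s : ι, B := by
        gcongr with σ _ s _
        exact hB s _ (hT_length σ s) z hz
    _ = B ^ Fintype.card ι * (Fintype.card ι : ℝ) ^ L.length := by
        simp [mul_comm]

end

theorem mixed_partial_of_monomial_bound_general (k n b : ℕ)
    (B : ℝ) (φ : (Fin k → ℝ) → Fin n → ℝ)
    (hdiff : ∀ (t : Fin n) (L : List (Fin k)), L.length < b →
      DifferentiableOn ℝ (mixedPartialWithin (unitCube k) L fun z => φ z t) (unitCube k))
    (hbound : ∀ (t : Fin n) (L : List (Fin k)), L.length ≤ b →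
      ∀ z ∈ unitCube k, |mixedPartialWithin (unitCube k) L (fun z => φ z t) z| ≤ B) :
    ∀ (i : Fin n → ℕ) (L : List (Fin k)), L.length ≤ b → ∀ z ∈ unitCube k,
      |mixedPartialWithin (unitCube k) L (fun z => ∏ t, φ z t ^ i t) z| ≤
        B ^ (∑ t, i t) * ((∑ t, i t : ℕ) : ℝ) ^ L.length := by
  intro i L hL z hz
  have hmonomial : (fun z => ∏ t, φ z t ^ i t) = fun z => ∏ p : Σ t, Fin (i t), φ z p.1 := by
    simp [Fintype.prod_sigma]
  have hcard : Fintype.card (Σ t, Fin (i t)) = ∑ t, i t := by simp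
  rw [hmonomial, ← hcard]
  exact abs_mixedPartialWithin_prod_le (isOpen_unitCube k).uniqueDiffOn
    (fun (p : Σ t, Fin (i t)) z => φ z p.1) L (fun p L' hL' => hdiff p.1 L' (hL'.trans_le hL))
    (fun p L' hL' => hbound p.1 L' (hL'.trans hL)) hz

/-- If the coordinate functions of `φ : (0,1)ᵏ → ℝⁿ` have continuous partial derivatives
up to order `b`, all bounded in modulus by `B ≥ 1` on `(0,1)ᵏ`, then for every
multi-index `i ∈ ℕ₀ⁿ` and every multi-index `α` (given as a list of directions of
length `ℓ(α) ≤ b`) one has `|∂^α(φⁱ)| ≤ B^{ℓ(i)} · ℓ(i)^{ℓ(α)}` on `(0,1)ᵏ`. -/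
theorem mixed_partial_of_monomial_bound (k n b : ℕ) (hk : 1 ≤ k) (hn : 1 ≤ n)
    (B : ℝ) (hB : 1 ≤ B) (φ : (Fin k → ℝ) → Fin n → ℝ)
    (hdiff : ∀ (t : Fin n) (L : List (Fin k)), L.length < b →
      DifferentiableOn ℝ (mixedPartialWithin (unitCube k) L fun z => φ z t) (unitCube k))
    (hcont : ∀ (t : Fin n) (L : List (Fin k)), L.length ≤ b →
      ContinuousOn (mixedPartialWithin (unitCube k) L fun z => φ z t) (unitCube k))
    (hbound : ∀ (t : Fin n) (L : List (Fin k)), L.length ≤ b →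
      ∀ z ∈ unitCube k, |mixedPartialWithin (unitCube k) L (fun z => φ z t) z| ≤ B) :
    ∀ (i : Fin n → ℕ) (L : List (Fin k)), L.length ≤ b → ∀ z ∈ unitCube k,
      |mixedPartialWithin (unitCube k) L (fun z => ∏ t, φ z t ^ i t) z| ≤
        B ^ (∑ t, i t) * ((∑ t, i t : ℕ) : ℝ) ^ L.length :=
  mixed_partial_of_monomial_bound_general k n b B φ hdiff hbound
end

section
/- Let M, N ≥ 1 be integers with M ≤ N and let A be a real M×N matrix with rows a₁, …, a_M satisfying |aᵢ|₂ ≥ 1 for all 1 ≤ i ≤ M. Set Δ = |a₁|₂ ⋯ |a_M|₂. If Q is a real number with Q ≥ 2√N · Δ^{1/N}, then there exists f ∈ ℤᴺ \ {0} with |f| ≤ Q and |Af| ≤ (2√N)^{N/M} · Q^{1 − N/M} · Δ^{1/M}. -/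
open Finset

/-- Two reals with the same integer floor differ by less than 1. -/
lemma abs_sub_lt_one_of_floor_eq {x y : ℝ} (h : ⌊x⌋ = ⌊y⌋) : |x - y| < 1 := by
  rw [abs_sub_lt_iff]
  have h1 := Int.lt_floor_add_one x
  have h2 := Int.floor_le y
  have h3 := Int.lt_floor_add_one y
  have h4 := Int.floor_le x
  have h5 : ((⌊x⌋ : ℝ)) = ((⌊y⌋ : ℝ)) := by exact_mod_cast h
  constructor <;> linarith

/-- The pigeonhole core of Siegel's lemma: given `T > 0` such that
`2T ≤ 2√N·Q·rᵢ` for each row and `∏ᵢ (2√N·Q·rᵢ/T) ≤ Qᴺ`, where `rᵢ` bounds the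
row sums `∑ⱼ |A i j| ≤ √N·rᵢ`, there is a nonzero integer vector `f` with
`|f| ≤ Q` and `|Af| ≤ T`. -/
lemma siegel_pigeonhole (M N : ℕ) (hM : 1 ≤ M) (hMN : M ≤ N)
    (A : Matrix (Fin M) (Fin N) ℝ) (r : Fin M → ℝ) (hr1 : ∀ i, 1 ≤ r i)
    (hCS : ∀ i, ∑ j, |A i j| ≤ Real.sqrt N * r i)
    (Q T : ℝ) (hQ2 : 2 ≤ Q) (hT0 : 0 < T)
    (hTQ2 : ∀ i, 2 * T ≤ 2 * Real.sqrt N * Q * r i)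
    (hprod : ∏ i, (2 * Real.sqrt N * Q * r i / T) ≤ Q ^ N) :
    ∃ f : Fin N → ℤ, f ≠ 0 ∧ (∀ j, |(f j : ℝ)| ≤ Q) ∧
      ∀ i, |∑ j, A i j * (f j : ℝ)| ≤ T := by
  classical
  have hQ0 : (0:ℝ) < Q := by linarith
  have hN : 1 ≤ N := le_trans hM hMN
  set q : ℕ := ⌊Q⌋₊ with hqdef
  have hqQ : (q:ℝ) ≤ Q := Nat.floor_le hQ0.le
  have hQq1 : Q < (q:ℝ) + 1 := Nat.lt_floor_add_one Q
  set L : Fin M → ℝ := fun i => ∑ j, (q:ℝ) * min (A i j) 0 with hL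
  set U : Fin M → ℝ := fun i => ∑ j, (q:ℝ) * max (A i j) 0 with hU
  set v : (Fin N → Fin (q+1)) → Fin M → ℝ :=
    fun f i => ∑ j, A i j * ((f j : ℕ) : ℝ) with hv
  have hbound : ∀ (f : Fin N → Fin (q+1)) i, L i ≤ v f i ∧ v f i ≤ U i := by
    intro f i
    have hfj : ∀ j, (0:ℝ) ≤ ((f j : ℕ):ℝ) ∧ ((f j : ℕ):ℝ) ≤ (q:ℝ) := by
      intro j
      refine ⟨by positivity, ?_⟩
      exact_mod_cast Fin.is_le (f j)
    constructor
    · apply Finset.sum_le_sum; intro j _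
      obtain ⟨h0, hq'⟩ := hfj j
      calc (q:ℝ) * min (A i j) 0 ≤ ((f j : ℕ):ℝ) * min (A i j) 0 :=
            mul_le_mul_of_nonpos_right hq' (min_le_right _ _)
        _ ≤ ((f j : ℕ):ℝ) * A i j := mul_le_mul_of_nonneg_left (min_le_left _ _) h0
        _ = A i j * ((f j : ℕ):ℝ) := mul_comm _ _
    · apply Finset.sum_le_sum; intro j _
      obtain ⟨h0, hq'⟩ := hfj j
      calc A i j * ((f j : ℕ):ℝ) = ((f j : ℕ):ℝ) * A i j := mul_comm _ _
        _ ≤ ((f j : ℕ):ℝ) * max (A i j) 0 :=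
            mul_le_mul_of_nonneg_left (le_max_left _ _) h0
        _ ≤ (q:ℝ) * max (A i j) 0 :=
            mul_le_mul_of_nonneg_right hq' (le_max_right _ _)
  have hUL : ∀ i, U i - L i = (q:ℝ) * ∑ j, |A i j| := by
    intro i
    rw [hU, hL, ← Finset.sum_sub_distrib, Finset.mul_sum]
    refine Finset.sum_congr rfl fun j _ => ?_
    rw [← mul_sub, max_sub_min_eq_abs, abs_sub_comm, sub_zero]
  have hUL0 : ∀ i, 0 ≤ U i - L i := by
    intro i; rw [hUL i]
    exact mul_nonneg (by positivity) (Finset.sum_nonneg fun j _ => abs_nonneg _)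
  set B : Fin M → ℤ := fun i => ⌊(U i - L i)/T⌋ with hB
  have hB0 : ∀ i, 0 ≤ B i := fun i =>
    Int.floor_nonneg.mpr (div_nonneg (hUL0 i) hT0.le)
  have hxge : ∀ i, 2 ≤ 2 * Real.sqrt N * Q * r i / T := by
    intro i
    rw [le_div_iff₀ hT0]
    linarith [hTQ2 i]
  have hBblt : ∀ i, ((B i : ℝ) + 1) ≤ 2 * Real.sqrt N * Q * r i / T := by
    intro i
    have h1 : (B i : ℝ) ≤ (U i - L i)/T := Int.floor_le _
    have hULle : U i - L i ≤ 2 * Real.sqrt N * Q * r i / 2 := by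
      rw [hUL i]
      have hsum0 : (0:ℝ) ≤ ∑ j, |A i j| := Finset.sum_nonneg fun j _ => abs_nonneg _
      have := mul_le_mul hqQ (hCS i) hsum0 hQ0.le
      nlinarith
    have h2 : (U i - L i)/T ≤ (2 * Real.sqrt N * Q * r i / 2)/T := by gcongr
    have h3 : (2 * Real.sqrt N * Q * r i / 2)/T = (2 * Real.sqrt N * Q * r i / T)/2 := by
      ring
    linarith [hxge i]
  -- the pigeonhole map
  set Φ : (Fin N → Fin (q+1)) → (Fin M → ℤ) := fun f i => ⌊(v f i - L i)/T⌋ with hΦ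
  have hmaps : ∀ f ∈ (Finset.univ : Finset (Fin N → Fin (q+1))),
      Φ f ∈ Fintype.piFinset (fun i => Finset.Icc (0:ℤ) (B i)) := by
    intro f _
    rw [Fintype.mem_piFinset]
    intro i
    rw [Finset.mem_Icc]
    obtain ⟨hl, hu⟩ := hbound f i
    constructor
    · exact Int.floor_nonneg.mpr (div_nonneg (by linarith) hT0.le)
    · exact Int.floor_le_floor (by gcongr)
  have hcards : (Fintype.piFinset (fun i => Finset.Icc (0:ℤ) (B i))).card
      < (Finset.univ : Finset (Fin N → Fin (q+1))).card := by
    rw [Fintype.card_piFinset, Finset.card_univ]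
    simp only [Int.card_Icc]
    have hcardR : ((∏ i, (B i + 1 - 0).toNat : ℕ) : ℝ) < (((q+1) ^ N : ℕ) : ℝ) := by
      push_cast
      have heq : ∀ i, (((B i + 1 - 0).toNat : ℤ) : ℝ) = (B i : ℝ) + 1 := by
        intro i
        have h0 : (0:ℤ) ≤ B i + 1 - 0 := by linarith [hB0 i]
        rw [Int.toNat_of_nonneg h0]; push_cast; ring
      calc ∏ i, (((B i + 1 - 0).toNat : ℤ) : ℝ)
          = ∏ i, ((B i : ℝ) + 1) := Finset.prod_congr rfl fun i _ => heq i
        _ ≤ ∏ i, (2 * Real.sqrt N * Q * r i / T) := by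
            apply Finset.prod_le_prod
            · intro i _
              have h0 : (0:ℝ) ≤ (B i : ℝ) := by exact_mod_cast hB0 i
              linarith
            · intro i _; exact hBblt i
        _ ≤ Q ^ N := hprod
        _ < ((q:ℝ) + 1) ^ N := by
            apply pow_lt_pow_left₀ hQq1 hQ0.le
            omega
    rw [show Fintype.card (Fin N → Fin (q+1)) = (q+1)^N by simp]
    exact_mod_cast hcardR
  have hcard2 : Fintype.card (Fin N → Fin (q+1)) = (q+1) ^ N := by
    simp
  obtain ⟨f, -, g, -, hfg, hΦeq⟩ :=
    Finset.exists_ne_map_eq_of_card_lt_of_maps_to hcards hmaps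
  refine ⟨fun j => ((f j : ℕ) : ℤ) - ((g j : ℕ) : ℤ), ?_, ?_, ?_⟩
  · intro h0
    apply hfg
    funext j
    have := congrFun h0 j
    simp only [Pi.zero_apply, sub_eq_zero] at this
    exact Fin.ext (by exact_mod_cast this)
  · intro j
    push_cast
    have h1 : ((f j : ℕ):ℝ) ≤ (q:ℝ) := by exact_mod_cast Fin.is_le (f j)
    have h2 : ((g j : ℕ):ℝ) ≤ (q:ℝ) := by exact_mod_cast Fin.is_le (g j)
    have h3 : (0:ℝ) ≤ ((f j : ℕ):ℝ) := by positivity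
    have h4 : (0:ℝ) ≤ ((g j : ℕ):ℝ) := by positivity
    rw [abs_sub_le_iff]
    constructor <;> linarith
  · intro i
    have hΦi : ⌊(v f i - L i)/T⌋ = ⌊(v g i - L i)/T⌋ := congrFun hΦeq i
    have hlt := abs_sub_lt_one_of_floor_eq hΦi
    rw [div_sub_div_same, show v f i - L i - (v g i - L i) = v f i - v g i by ring,
      abs_div, abs_of_pos hT0, div_lt_one hT0] at hlt
    have heq : ∑ j, A i j * ((((f j : ℕ):ℤ) - ((g j : ℕ):ℤ) : ℤ) : ℝ)
        = v f i - v g i := by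
      rw [hv]
      simp only
      rw [← Finset.sum_sub_distrib]
      refine Finset.sum_congr rfl fun j _ => ?_
      push_cast
      ring
    calc |∑ j, A i j * ((((f j : ℕ):ℤ) - ((g j : ℕ):ℤ) : ℤ) : ℝ)|
        = |v f i - v g i| := by rw [heq]
      _ ≤ T := hlt.le

/-- Approximate Thue–Siegel lemma via Minkowski's lattice point theorem:
given a real `M × N` matrix `A` (with `M ≤ N`) whose rows `aᵢ` have Euclidean norm
`≥ 1`, and `Δ = ∏ᵢ |aᵢ|₂`, for every `Q ≥ 2√N · Δ^{1/N}` there is a nonzero integer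
vector `f` with `|f| ≤ Q` (max norm) and `|Af| ≤ (2√N)^{N/M} · Q^{1−N/M} · Δ^{1/M}`
(max norm). -/
theorem approximate_thue_siegel (M N : ℕ) (hM : 1 ≤ M) (hMN : M ≤ N)
    (A : Matrix (Fin M) (Fin N) ℝ)
    (hrow : ∀ i, 1 ≤ Real.sqrt (∑ j, A i j ^ 2)) (Q : ℝ)
    (hQ : 2 * Real.sqrt N * (∏ i, Real.sqrt (∑ j, A i j ^ 2)) ^ (1 / (N : ℝ)) ≤ Q) :
    ∃ f : Fin N → ℤ, f ≠ 0 ∧ (∀ j, |(f j : ℝ)| ≤ Q) ∧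
      ∀ i, |∑ j, A i j * (f j : ℝ)| ≤
        (2 * Real.sqrt N) ^ ((N : ℝ) / (M : ℝ)) * Q ^ (1 - (N : ℝ) / (M : ℝ)) *
          (∏ i, Real.sqrt (∑ j, A i j ^ 2)) ^ (1 / (M : ℝ)) := by
  classical
  have hN : 1 ≤ N := le_trans hM hMN
  have hM0 : (0:ℝ) < (M:ℝ) := by exact_mod_cast hM
  have hN0 : (0:ℝ) < (N:ℝ) := by exact_mod_cast hN
  obtain ⟨r, hrdef⟩ : ∃ r : Fin M → ℝ, r = fun i => Real.sqrt (∑ j, A i j ^ 2) :=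
    ⟨_, rfl⟩
  have hr1 : ∀ i, 1 ≤ r i := by rw [hrdef]; exact hrow
  have hr0 : ∀ i, 0 ≤ r i := fun i => le_trans zero_le_one (hr1 i)
  obtain ⟨Δ, hΔdef⟩ : ∃ D : ℝ, D = ∏ i, Real.sqrt (∑ j, A i j ^ 2) := ⟨_, rfl⟩
  have hΔr : Δ = ∏ i, r i := by rw [hΔdef, hrdef]
  have hΔ1 : (1:ℝ) ≤ Δ := by
    rw [hΔr]
    calc (1:ℝ) = ∏ _i : Fin M, (1:ℝ) := by simp
      _ ≤ ∏ i, r i := Finset.prod_le_prod (by intros; norm_num) (fun i _ => hr1 i)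
  have hΔ0 : (0:ℝ) < Δ := lt_of_lt_of_le one_pos hΔ1
  have hsqN : (1:ℝ) ≤ Real.sqrt N := by
    rw [show (1:ℝ) = Real.sqrt 1 by simp]
    exact Real.sqrt_le_sqrt (by exact_mod_cast hN)
  have hΔr1 : (1:ℝ) ≤ Δ ^ (1/(N:ℝ)) := Real.one_le_rpow hΔ1 (by positivity)
  rw [← hΔdef] at hQ
  have hQ2 : (2:ℝ) ≤ Q := le_trans (by nlinarith) hQ
  have hQ0 : (0:ℝ) < Q := by linarith
  obtain ⟨T, hTdef⟩ : ∃ T : ℝ, T = (2 * Real.sqrt N) ^ ((N:ℝ)/(M:ℝ)) *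
      Q ^ (1 - (N:ℝ)/(M:ℝ)) * Δ ^ (1/(M:ℝ)) := ⟨_, rfl⟩
  have hsq0 : (0:ℝ) < 2 * Real.sqrt N := by linarith
  have hT0 : 0 < T := by
    rw [hTdef]; positivity
  -- key exponent computation : T ^ M = (2√N)^N * Q^(M-N) * Δ  (as rpow)
  have hTM : T ^ ((M:ℕ):ℝ) = (2 * Real.sqrt N) ^ ((N:ℕ):ℝ) *
      Q ^ ((M:ℝ) - (N:ℝ)) * Δ := by
    rw [hTdef, Real.mul_rpow (by positivity) (by positivity),
        Real.mul_rpow (by positivity) (by positivity),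
        ← Real.rpow_mul hsq0.le, ← Real.rpow_mul hQ0.le, ← Real.rpow_mul hΔ0.le]
    rw [show (N:ℝ)/(M:ℝ) * (M:ℝ) = (N:ℝ) by field_simp,
        show (1 - (N:ℝ)/(M:ℝ)) * (M:ℝ) = (M:ℝ) - (N:ℝ) by field_simp,
        show 1/(M:ℝ) * (M:ℝ) = 1 by field_simp, Real.rpow_one]
  -- T ≤ Q
  have hTQ : T ≤ Q := by
    have h1 : (2 * Real.sqrt N) ^ ((N:ℝ)/(M:ℝ)) * Δ ^ (1/(M:ℝ))
        ≤ Q ^ ((N:ℝ)/(M:ℝ)) := by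
      have h2 := Real.rpow_le_rpow (by positivity) hQ
        (by positivity : (0:ℝ) ≤ (N:ℝ)/(M:ℝ))
      rwa [Real.mul_rpow (by positivity) (by positivity), ← Real.rpow_mul hΔ0.le,
        show 1/(N:ℝ) * ((N:ℝ)/(M:ℝ)) = 1/(M:ℝ) by field_simp] at h2
    calc T = ((2 * Real.sqrt N) ^ ((N:ℝ)/(M:ℝ)) * Δ ^ (1/(M:ℝ))) *
          Q ^ (1 - (N:ℝ)/(M:ℝ)) := by rw [hTdef]; ring
      _ ≤ Q ^ ((N:ℝ)/(M:ℝ)) * Q ^ (1 - (N:ℝ)/(M:ℝ)) :=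
          mul_le_mul_of_nonneg_right h1 (by positivity)
      _ = Q := by
          rw [← Real.rpow_add hQ0, show (N:ℝ)/(M:ℝ) + (1 - (N:ℝ)/(M:ℝ)) = 1 by ring,
            Real.rpow_one]
  -- Cauchy–Schwarz : ∑ⱼ |A i j| ≤ √N * r i
  have hCS : ∀ i, ∑ j, |A i j| ≤ Real.sqrt N * r i := by
    intro i
    have h := Finset.sum_mul_sq_le_sq_mul_sq Finset.univ (fun _ => (1:ℝ))
      (fun j => |A i j|)
    simp only [one_pow, one_mul, sq_abs, Finset.sum_const, Finset.card_univ,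
      Fintype.card_fin, nsmul_eq_mul, mul_one] at h
    have h2 : (∑ j, |A i j|) ^ 2 ≤ (Real.sqrt N * r i) ^ 2 := by
      rw [mul_pow, Real.sq_sqrt hN0.le, hrdef]
      rw [Real.sq_sqrt (by positivity)]
      exact h
    have hnn : (0:ℝ) ≤ ∑ j, |A i j| := Finset.sum_nonneg fun j _ => abs_nonneg _
    nlinarith [mul_nonneg (Real.sqrt_nonneg (N:ℝ)) (hr0 i)]
  -- the two inequalities needed by the pigeonhole lemma
  have hTQ2 : ∀ i, 2 * T ≤ 2 * Real.sqrt N * Q * r i := by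
    intro i
    have ha : 1 * Q ≤ Real.sqrt N * Q := mul_le_mul_of_nonneg_right hsqN hQ0.le
    have hb : (Real.sqrt N * Q) * 1 ≤ (Real.sqrt N * Q) * r i :=
      mul_le_mul_of_nonneg_left (hr1 i) (by positivity)
    have h1 : Q ≤ Real.sqrt N * Q * r i := by
      calc Q = 1 * Q := (one_mul Q).symm
        _ ≤ Real.sqrt N * Q := ha
        _ = (Real.sqrt N * Q) * 1 := (mul_one _).symm
        _ ≤ Real.sqrt N * Q * r i := hb
    linarith
  have hprod : ∏ i, (2 * Real.sqrt N * Q * r i / T) ≤ Q ^ N := by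
    have hprodx : ∏ i, (2 * Real.sqrt N * Q * r i / T)
        = (2 * Real.sqrt N) ^ (M:ℕ) * Q ^ (M:ℕ) * Δ / T ^ (M:ℕ) := by
      rw [Finset.prod_div_distrib, Finset.prod_const]
      rw [show (fun i => 2 * Real.sqrt N * Q * r i) = fun i =>
        (2 * Real.sqrt N * Q) * r i by rfl]
      rw [Finset.prod_mul_distrib, Finset.prod_const, Finset.card_univ,
        Fintype.card_fin, ← hΔr, mul_pow]
    have hkey : (2 * Real.sqrt N) ^ (M:ℕ) * Q ^ (M:ℕ) * Δ ≤ Q ^ N * T ^ (M:ℕ) := by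
      have e1 : (T:ℝ) ^ (M:ℕ) = (2 * Real.sqrt N) ^ ((N:ℕ):ℝ) *
          Q ^ ((M:ℝ) - (N:ℝ)) * Δ := by
        rw [← hTM, Real.rpow_natCast]
      have e2 : (Q:ℝ) ^ (N:ℕ) * ((Q:ℝ) ^ ((M:ℝ) - (N:ℝ))) = Q ^ ((M:ℕ):ℝ) := by
        rw [← Real.rpow_natCast Q N, ← Real.rpow_add hQ0]
        norm_num
      have e3 : (2 * Real.sqrt N) ^ (M:ℕ) ≤ (2 * Real.sqrt N) ^ ((N:ℕ):ℝ) := by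
        rw [← Real.rpow_natCast (2 * Real.sqrt N) M]
        exact Real.rpow_le_rpow_of_exponent_le (by linarith) (by exact_mod_cast hMN)
      calc (2 * Real.sqrt N) ^ (M:ℕ) * Q ^ (M:ℕ) * Δ
          ≤ (2 * Real.sqrt N) ^ ((N:ℕ):ℝ) * Q ^ (M:ℕ) * Δ := by
            have h0 : (0:ℝ) ≤ Q ^ (M:ℕ) := by positivity
            exact mul_le_mul_of_nonneg_right
              (mul_le_mul_of_nonneg_right e3 h0) hΔ0.le
        _ = Q ^ N * T ^ (M:ℕ) := by
            rw [e1, ← Real.rpow_natCast Q M, ← e2]; ring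
    rw [hprodx, div_le_iff₀ (by positivity)]
    exact hkey
  obtain ⟨f, hf0, hfQ, hfT⟩ := siegel_pigeonhole M N hM hMN A r hr1 hCS Q T hQ2 hT0
    hTQ2 hprod
  exact ⟨f, hf0, hfQ, fun i => by rw [← hΔdef, ← hTdef]; exact hfT i⟩
end

section
/- Let X = {(x, e^{−1/x}) : x ∈ (0,1]} ∪ {(0,0)} ⊂ ℝ². For every λ > 0 there exists T₀ ≥ 1 such that for all real T ≥ T₀, the number of points q ∈ ℚ² with H(q) ≤ T for which there exists x ∈ X with |q − x| < T^{−λ} is at least T/2 − 1. -/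
/-- The height of a rational number `a/b` in lowest terms (`b ≥ 1`) is `max |a| b`. -/
def ratHeight (q : ℚ) : ℕ := max q.num.natAbs q.den

/-- The set `X = {(x, e^{−1/x}) : x ∈ (0,1]} ∪ {(0,0)} ⊂ ℝ²`. -/
def expGraphSet : Set (ℝ × ℝ) :=
  {p | ∃ t : ℝ, t ∈ Set.Ioc (0 : ℝ) 1 ∧ p = (t, Real.exp (-1 / t))} ∪ {(0, 0)}

/-- For every `λ > 0` there is `T₀ ≥ 1` such that for all `T ≥ T₀` there are at least
`T/2 − 1` rational points `q ∈ ℚ²` of height at most `T` within distance `T^{−λ}`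
(maximum norm) of some point of `X`. -/
theorem many_rational_approximations_to_exp_graph (lam : ℝ) (hlam : 0 < lam) :
    ∃ T₀ : ℝ, 1 ≤ T₀ ∧ ∀ T : ℝ, T₀ ≤ T →
      ∃ F : Finset (ℚ × ℚ),
        (∀ q ∈ F, (max (ratHeight q.1) (ratHeight q.2) : ℝ) ≤ T ∧
          ∃ x ∈ expGraphSet, ‖(((q.1 : ℝ), (q.2 : ℝ)) : ℝ × ℝ) - x‖ < T ^ (-lam)) ∧
        T / 2 - 1 ≤ (F.card : ℝ) := by
  refine ⟨max 4 ((4 * lam + 1) ^ 2), le_trans (by norm_num) (le_max_left _ _), ?_⟩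
  intro T hT
  have hT4 : (4 : ℝ) ≤ T := le_trans (le_max_left _ _) hT
  have hTpos : (0 : ℝ) < T := by linarith
  have hsq : 4 * lam + 1 ≤ Real.sqrt T := by
    have h : (4 * lam + 1) ^ 2 ≤ T := le_trans (le_max_right _ _) hT
    calc 4 * lam + 1 = Real.sqrt ((4 * lam + 1) ^ 2) := by
          rw [Real.sqrt_sq (by positivity)]
      _ ≤ Real.sqrt T := Real.sqrt_le_sqrt h
  have hsqpos : 0 < Real.sqrt T := by positivity
  have h5 : Real.sqrt T * Real.sqrt T = T := Real.mul_self_sqrt hTpos.le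
  have hlog : lam * Real.log T < T / 2 := by
    have h2 : Real.log (Real.sqrt T) ≤ Real.sqrt T - 1 :=
      Real.log_le_sub_one_of_pos hsqpos
    rw [Real.log_sqrt hTpos.le] at h2
    nlinarith
  set a := ⌈T / 2⌉₊ with ha
  set b := ⌊T⌋₊ with hb
  have halb : (a : ℝ) < T / 2 + 1 := Nat.ceil_lt_add_one (by linarith)
  have hbge : T - 1 < (b : ℝ) := Nat.sub_one_lt_floor T
  have hble : (b : ℝ) ≤ T := Nat.floor_le hTpos.le
  have hage : T / 2 ≤ (a : ℝ) := Nat.le_ceil _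
  have hapos : 1 ≤ a := Nat.one_le_ceil_iff.mpr (by linarith)
  have hab : a ≤ b := by
    have : (a : ℝ) ≤ (b : ℝ) := by linarith
    exact_mod_cast this
  refine ⟨(Finset.Icc a b).image (fun n : ℕ => ((n : ℚ)⁻¹, (0 : ℚ))), ?_, ?_⟩
  · intro q hq
    simp only [Finset.mem_image, Finset.mem_Icc] at hq
    obtain ⟨n, ⟨hna, hnb⟩, rfl⟩ := hq
    have hn1 : 1 ≤ n := le_trans hapos hna
    have hn0 : 0 < n := hn1
    have hnum : ((n : ℚ)⁻¹).num = 1 := Rat.inv_natCast_num_of_pos hn0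
    have hden : ((n : ℚ)⁻¹).den = n := Rat.inv_natCast_den_of_pos hn0
    have hnT : (n : ℝ) ≤ T := by
      calc (n : ℝ) ≤ (b : ℝ) := by exact_mod_cast hnb
        _ ≤ T := hble
    constructor
    · have h1 : ratHeight ((n:ℚ)⁻¹) = n := by
        simp only [ratHeight, hnum, hden, Int.natAbs_one]
        exact max_eq_right hn1
      have h2 : ratHeight (0:ℚ) = 1 := rfl
      rw [h1, h2]
      rw [max_le_iff]
      refine ⟨hnT, by norm_num; linarith⟩
    · refine ⟨((n : ℝ)⁻¹, Real.exp (-(n : ℝ))), Or.inl ⟨(n : ℝ)⁻¹, ?_, ?_⟩, ?_⟩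
      · constructor
        · positivity
        · rw [inv_le_one_iff₀]; right; exact_mod_cast hn1
      · congr 2
        rw [div_eq_mul_inv, inv_inv]; ring
      · have hnorm : ‖((((n:ℚ)⁻¹ : ℚ) : ℝ), ((0:ℚ) : ℝ)) - ((n : ℝ)⁻¹, Real.exp (-(n : ℝ)))‖
            = Real.exp (-(n : ℝ)) := by
          have : ((((n:ℚ)⁻¹ : ℚ) : ℝ), ((0:ℚ) : ℝ)) - ((n : ℝ)⁻¹, Real.exp (-(n : ℝ)))
              = (0, -Real.exp (-(n : ℝ))) := by
            push_cast
            ext <;> simp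
          rw [this, Prod.norm_def]
          simp [Real.norm_eq_abs, abs_of_pos (Real.exp_pos _)]
          positivity
        rw [hnorm]
        rw [Real.rpow_def_of_pos hTpos]
        apply Real.exp_lt_exp.mpr
        have : T / 2 ≤ (n : ℝ) := le_trans hage (by exact_mod_cast hna)
        nlinarith
  · have hinj : Set.InjOn (fun n : ℕ => ((n : ℚ)⁻¹, (0 : ℚ))) (Finset.Icc a b) := by
      intro m hm n hn h
      simp only [Finset.coe_Icc, Set.mem_Icc] at hm hn
      have hm0 : 0 < m := le_trans hapos hm.1
      have hn0 : 0 < n := le_trans hapos hn.1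
      have : ((m : ℚ))⁻¹ = ((n : ℚ))⁻¹ := congrArg Prod.fst h
      have : (m : ℚ) = (n : ℚ) := by
        rwa [inv_inj] at this
      exact_mod_cast this
    rw [Finset.card_image_of_injOn hinj, Nat.card_Icc]
    have hcast : ((b + 1 - a : ℕ) : ℝ) = (b : ℝ) + 1 - (a : ℝ) := by
      have : a ≤ b + 1 := le_trans hab (Nat.le_succ b)
      push_cast [Nat.cast_sub this]
      ring
    rw [hcast]
    linarith
end

section
/- Let M, N ≥ 1 be integers with M ≤ N, let A be a real M×N matrix with rows a₁, …, a_M satisfying |aᵢ|₂ ≥ 1 for all i, and let ε ∈ (0,1]. Let Ā be the (M+N)×N matrix obtained by stacking A on top of ε times the N×N identity matrix. Then det(Āᵀ·Ā) ≤ C(M+N, N) · (|a₁|₂ ⋯ |a_M|₂)² · ε^{2(N−M)}. -/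
/-!
The Gram matrix of the stacked matrix is `AᵀA + ε²I`, and Sylvester's identity
`det (AᵀA + ε²I) = ε^(2(N-M)) det (AAᵀ + ε²I)` moves the determinant to the `M × M` matrix
`AAᵀ + ε²I`, whose diagonal entries are `|aᵢ|² + ε² ≤ 2|aᵢ|²`. Hadamard's inequality bounds that
determinant by `2^M ∏ |aᵢ|²`, and `2^M ≤ C(M+N, M)` by Vandermonde's identity since `M ≤ N`.
Hadamard's inequality itself is AM–GM on the eigenvalues, after rescaling to unit diagonal.
-/

open Matrix Finset

theorem Real.prod_le_one_of_sum_eq_card {ι : Type*} [Fintype ι] {z : ι → ℝ} (hz : ∀ i, 0 ≤ z i)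
    (hsum : ∑ i, z i = Fintype.card ι) : ∏ i, z i ≤ 1 := by
  cases isEmpty_or_nonempty ι
  · simp
  have hn : (0 : ℝ) < Fintype.card ι := by exact_mod_cast Fintype.card_pos
  have hmean : ∏ i, z i ^ (Fintype.card ι : ℝ)⁻¹ ≤ ∑ i, (Fintype.card ι : ℝ)⁻¹ * z i :=
    Real.geom_mean_le_arith_mean_weighted _ _ _ (fun _ _ => by positivity)
      (by simp [hn.ne']) (fun i _ => hz i)
  rwa [Real.finsetProd_rpow _ _ (fun i _ => hz i), ← mul_sum, hsum, inv_mul_cancel₀ hn.ne',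
    Real.rpow_inv_le_iff_of_pos (prod_nonneg fun i _ => hz i) zero_le_one hn, Real.one_rpow]
    at hmean

theorem Nat.two_pow_le_add_choose {m n : ℕ} (h : m ≤ n) : 2 ^ m ≤ (m + n).choose m := by
  rw [Nat.add_choose_eq, Finset.Nat.sum_antidiagonal_eq_sum_range_succ_mk, ← Nat.sum_range_choose]
  exact sum_le_sum fun i _ => Nat.le_mul_of_pos_right _ (Nat.choose_pos ((Nat.sub_le m i).trans h))

namespace Matrix

variable {m n : Type*}

theorem PosSemidef.det_le_one_of_diag_eq_one [Fintype n] [DecidableEq n] {C : Matrix n n ℝ}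
    (hC : C.PosSemidef) (hdiag : ∀ i, C i i = 1) : C.det ≤ 1 := by
  rw [hC.isHermitian.det_eq_prod_eigenvalues]
  refine Real.prod_le_one_of_sum_eq_card hC.eigenvalues_nonneg ?_
  have htrace := hC.isHermitian.trace_eq_sum_eigenvalues
  simp_all [trace]

theorem PosSemidef.det_le_prod_diag [Fintype n] [DecidableEq n] {B : Matrix n n ℝ}
    (hB : B.PosSemidef) (hdiag : ∀ i, 0 < B i i) : B.det ≤ ∏ i, B i i := by
  set D := diagonal fun i => (√(B i i))⁻¹
  have hsq : ∀ i, (√(B i i))⁻¹ * (√(B i i))⁻¹ = (B i i)⁻¹ := fun i => by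
    rw [← mul_inv, Real.mul_self_sqrt (hdiag i).le]
  have hpsd : (D * B * D).PosSemidef := by
    simpa [D] using hB.mul_mul_conjTranspose_same D
  have hunit : (D * B * D).det ≤ 1 := hpsd.det_le_one_of_diag_eq_one fun i => by
    rw [mul_diagonal, diagonal_mul, mul_right_comm, hsq, inv_mul_cancel₀ (hdiag i).ne']
  have hdet : (D * B * D).det = B.det / ∏ i, B i i := by
    rw [det_mul, det_mul, det_diagonal, mul_comm, ← mul_assoc, ← prod_mul_distrib]
    simp only [hsq, prod_inv_distrib, div_eq_mul_inv, mul_comm]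
  rwa [hdet, div_le_one (prod_pos fun i _ => hdiag i)] at hunit

theorem det_mul_add_smul_one_comm [Fintype m] [Fintype n] [DecidableEq m] [DecidableEq n]
    {K : Type*} [Field K] (A : Matrix m n K) (B : Matrix n m K) {c : K} (hc : c ≠ 0)
    (hcard : Fintype.card m ≤ Fintype.card n) :
    (B * A + c • 1).det = c ^ (Fintype.card n - Fintype.card m) * (A * B + c • 1).det := by
  have hBA : B * A + c • 1 = c • (1 + (c⁻¹ • B) * A) := by
    rw [smul_add, smul_mul, smul_smul, mul_inv_cancel₀ hc, one_smul, add_comm]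
  have hAB : A * B + c • 1 = c • (1 + A * (c⁻¹ • B)) := by
    rw [smul_add, Matrix.mul_smul, smul_smul, mul_inv_cancel₀ hc, one_smul, add_comm]
  rw [hBA, hAB, det_smul, det_smul, det_one_add_mul_comm, ← mul_assoc, ← pow_add,
    Nat.sub_add_cancel hcard]

theorem fromRows_transpose_mul_fromRows {m₁ m₂ R : Type*} [Fintype m₁] [Fintype m₂]
    [CommSemiring R] (A₁ : Matrix m₁ n R) (A₂ : Matrix m₂ n R) :
    (fromRows A₁ A₂)ᵀ * fromRows A₁ A₂ = A₁ᵀ * A₁ + A₂ᵀ * A₂ := by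
  rw [transpose_fromRows, fromCols_mul_fromRows]

theorem mul_transpose_self_apply_self [Fintype n] {R : Type*} [CommSemiring R]
    (A : Matrix m n R) (i : m) : (A * Aᵀ) i i = ∑ j, A i j ^ 2 := by
  simp [mul_apply, sq]

end Matrix

theorem gram_determinant_bound_general (M N : ℕ) (hMN : M ≤ N)
    (A : Matrix (Fin M) (Fin N) ℝ)
    (hrow : ∀ i, 1 ≤ Real.sqrt (∑ j, A i j ^ 2)) (ε : ℝ) (hε : ε ∈ Set.Ioc (0 : ℝ) 1) :
    ((Matrix.fromRows A (ε • (1 : Matrix (Fin N) (Fin N) ℝ)))ᵀ *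
        Matrix.fromRows A (ε • (1 : Matrix (Fin N) (Fin N) ℝ))).det ≤
      ((M + N).choose N : ℝ) * (∏ i, Real.sqrt (∑ j, A i j ^ 2)) ^ 2 * ε ^ (2 * (N - M)) := by
  obtain ⟨hε0, hε1⟩ := hε
  set r : Fin M → ℝ := fun i => √(∑ j, A i j ^ 2)
  set B := A * Aᵀ + ε ^ 2 • (1 : Matrix (Fin M) (Fin M) ℝ)
  have hB : B.PosSemidef := by
    simpa using (posSemidef_self_mul_conjTranspose A).add (PosSemidef.one.smul (sq_nonneg ε))
  have hdiag : ∀ i, B i i = r i ^ 2 + ε ^ 2 := fun i => by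
    have hsum : 0 ≤ ∑ j, A i j ^ 2 := sum_nonneg fun j _ => sq_nonneg (A i j)
    simp [B, r, mul_transpose_self_apply_self, Real.sq_sqrt hsum]
  have hchoose : (2 : ℝ) ^ M ≤ (M + N).choose N := by
    exact_mod_cast Nat.choose_symm_add ▸ Nat.two_pow_le_add_choose hMN
  calc _ = (Aᵀ * A + ε ^ 2 • 1).det := by
        rw [fromRows_transpose_mul_fromRows, transpose_smul, transpose_one, smul_mul_smul,
          one_mul, sq]
    _ = ε ^ (2 * (N - M)) * B.det := by
      rw [det_mul_add_smul_one_comm A Aᵀ (by positivity) (by simpa using hMN), pow_mul]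
      simp only [Fintype.card_fin, B]
    _ ≤ ε ^ (2 * (N - M)) * ∏ i, B i i := by
      gcongr
      exact hB.det_le_prod_diag fun i => by rw [hdiag]; positivity
    _ ≤ ε ^ (2 * (N - M)) * ∏ i, 2 * r i ^ 2 := by
      gcongr with i
      · exact fun i _ => hB.diag_nonneg
      · nlinarith [hdiag i, hrow i]
    _ = ε ^ (2 * (N - M)) * (2 ^ M * (∏ i, r i) ^ 2) := by
      simp [prod_mul_distrib, prod_pow]
    _ ≤ _ := by
      rw [mul_comm]
      gcongr

theorem gram_determinant_bound (M N : ℕ) (hM : 1 ≤ M) (hMN : M ≤ N)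
    (A : Matrix (Fin M) (Fin N) ℝ)
    (hrow : ∀ i, 1 ≤ Real.sqrt (∑ j, A i j ^ 2)) (ε : ℝ) (hε : ε ∈ Set.Ioc (0 : ℝ) 1) :
    ((Matrix.fromRows A (ε • (1 : Matrix (Fin N) (Fin N) ℝ)))ᵀ *
        Matrix.fromRows A (ε • (1 : Matrix (Fin N) (Fin N) ℝ))).det ≤
      ((M + N).choose N : ℝ) * (∏ i, Real.sqrt (∑ j, A i j ^ 2)) ^ 2 * ε ^ (2 * (N - M)) :=
  gram_determinant_bound_general M N hMN A hrow ε hε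
end

section
/- Let k, r, e, d, b be positive integers with 1 ≤ k ≤ r, d + 1 ≥ (e+1)(r+1), and C(d+r+1, r+1) < (e+1)·C(b+1+k, k). Then d < b and (d/b)^r · (d+1)/(r+1) < e + 1. -/
/-!
Write `M(n) = C(n + 1 + r, r)`. The identity `C(d + r + 1, r + 1) (r + 1) = (d + 1) M(d)` turns the
hypothesis into `(d + 1) M(d) < (e + 1)(r + 1) C(b + 1 + k, k) ≤ (e + 1)(r + 1) M(b)`, since
`C(n + k, k)` grows with `k`. If `b ≤ d`, then `M(b) ≤ M(d)` and `(e + 1)(r + 1) ≤ d + 1` contradict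
this, so `d < b`. Then `M(n) / n ^ r = ∏ (n + 1 + i) / (n i)` decreases in `n`, so
`d ^ r M(b) ≤ b ^ r M(d)`, which gives `d ^ r (d + 1) < (e + 1)(r + 1) b ^ r`.
-/

namespace Nat

theorem choose_add_le_choose_add (m : ℕ) {k j : ℕ} (hkj : k ≤ j) :
    (m + k).choose k ≤ (m + j).choose j := by
  rw [← choose_symm_add, ← choose_symm_add]
  exact choose_le_choose m (by omega)

theorem add_succ_choose_succ_mul (d r : ℕ) :
    (d + r + 1).choose (r + 1) * (r + 1) = (d + 1) * (d + 1 + r).choose r := by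
  rw [choose_succ_right_eq, mul_comm, show d + r + 1 - r = d + 1 by omega,
    show d + r + 1 = d + 1 + r by omega]

theorem pow_mul_choose_le_pow_mul_choose {d b : ℕ} (hdb : d ≤ b) (m r : ℕ) :
    d ^ r * (b + m + r).choose r ≤ b ^ r * (d + m + r).choose r := by
  induction r with
  | zero => simp
  | succ r ih =>
    have hstep : d * (b + m + r + 1) ≤ b * (d + m + r + 1) := by nlinarith
    refine le_of_mul_le_mul_right ?_ r.succ_pos
    calc d ^ (r + 1) * (b + m + (r + 1)).choose (r + 1) * (r + 1)
        = d * (b + m + r + 1) * (d ^ r * (b + m + r).choose r) := by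
          rw [mul_assoc, ← add_assoc, ← add_one_mul_choose_eq]; ring
      _ ≤ b * (d + m + r + 1) * (b ^ r * (d + m + r).choose r) := mul_le_mul' hstep ih
      _ = b ^ (r + 1) * (d + m + (r + 1)).choose (r + 1) * (r + 1) := by
          rw [mul_assoc _ _ (r + 1), ← add_assoc, ← add_one_mul_choose_eq]; ring

end Nat

theorem choose_inequality_consequence_general (k r e d b : ℕ) (hkr : k ≤ r)
    (hd1 : (e + 1) * (r + 1) ≤ d + 1)
    (hch : (d + r + 1).choose (r + 1) < (e + 1) * (b + 1 + k).choose k) :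
    d < b ∧ ((d : ℝ) / (b : ℝ)) ^ r * (((d : ℝ) + 1) / ((r : ℝ) + 1)) < (e : ℝ) + 1 := by
  have hmono : (b + 1 + k).choose k ≤ (b + 1 + r).choose r := Nat.choose_add_le_choose_add _ hkr
  have hch' : (d + 1) * (d + 1 + r).choose r < (e + 1) * (r + 1) * (b + 1 + r).choose r := by
    rw [← Nat.add_succ_choose_succ_mul]
    calc _ < (e + 1) * (b + 1 + k).choose k * (r + 1) := Nat.mul_lt_mul_of_pos_right hch r.succ_pos
      _ ≤ (e + 1) * (b + 1 + r).choose r * (r + 1) := by gcongr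
      _ = _ := by ring
  have hdb : d < b := by
    by_contra! hbd
    have : (b + 1 + r).choose r ≤ (d + 1 + r).choose r := Nat.choose_le_choose r (by omega)
    exact hch'.not_ge (mul_le_mul' hd1 this)
  have hnat : d ^ r * (d + 1) < (e + 1) * (r + 1) * b ^ r := by
    have hpow := Nat.pow_mul_choose_le_pow_mul_choose hdb.le 1 r
    have hb : 0 < b ^ r := Nat.pow_pos (by omega)
    refine lt_of_mul_lt_mul_right (a := (b + 1 + r).choose r) ?_ (Nat.zero_le _)
    calc _ = (d + 1) * (d ^ r * (b + 1 + r).choose r) := by ring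
      _ ≤ (d + 1) * (b ^ r * (d + 1 + r).choose r) := by gcongr
      _ = b ^ r * ((d + 1) * (d + 1 + r).choose r) := by ring
      _ < b ^ r * ((e + 1) * (r + 1) * (b + 1 + r).choose r) := Nat.mul_lt_mul_of_pos_left hch' hb
      _ = _ := by ring
  refine ⟨hdb, ?_⟩
  have hb : (0 : ℝ) < b := by exact_mod_cast hdb.trans_le' (Nat.zero_le d)
  rw [div_pow, div_mul_div_comm, div_lt_iff₀ (by positivity)]
  calc (d : ℝ) ^ r * (d + 1) < (e + 1) * (r + 1) * b ^ r := by exact_mod_cast hnat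
    _ = _ := by ring

theorem choose_inequality_consequence (k r e d b : ℕ) (hk : 1 ≤ k) (hkr : k ≤ r)
    (he : 1 ≤ e) (hd : 1 ≤ d) (hb : 1 ≤ b)
    (hd1 : (e + 1) * (r + 1) ≤ d + 1)
    (hch : (d + r + 1).choose (r + 1) < (e + 1) * (b + 1 + k).choose k) :
    d < b ∧ ((d : ℝ) / (b : ℝ)) ^ r * (((d : ℝ) + 1) / ((r : ℝ) + 1)) < (e : ℝ) + 1 :=
  choose_inequality_consequence_general k r e d b hkr hd1 hch
end
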